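/- Let f∈𝓜(1). Then T_{f²} is an everywhere defined bounded operator on ℓ²(ℕ), where f² denotes the function n↦f(n)². -/

import Mathlib

open Filter Topology
open scoped ENNReal

noncomputable section

abbrev l2 : Type := lp (fun _ : ℕ => ℂ) 2

def xi (n : ℕ) : l2 := lp.single 2 n 1

def FinSupp (φ : l2) : Prop := (Function.support (⇑φ : ℕ → ℂ)).Finite

/-- The class 𝒦. -/
def MemK (f : ℕ → ℝ) : Prop := 0 < f 0 ∧ ∀ n, f n < f (n + 1)

/-- The class 𝒦⁻. -/
def MemKminus (f : ℕ → ℝ) : Prop := MemK f ∧ Summable (fun n => 1 / (f n) ^ 2)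

def fsq (f : ℕ → ℝ) : ℕ → ℝ := fun n => (f n) ^ 2

/-- the sequence of the multiplication operator `f(N)` applied to φ -/
def mulSeq (f : ℕ → ℝ) (φ : ℕ → ℂ) : ℕ → ℂ := fun n => ((f n : ℝ) : ℂ) * φ n

/-- the sequence of `f(N)^p` applied to φ -/
def powSeq (f : ℕ → ℝ) (p : ℕ) (φ : ℕ → ℂ) : ℕ → ℂ := fun n => (((f n) ^ p : ℝ) : ℂ) * φ n

/-- coordinates of `T_{f,m} φ`. -/
def TfmSeq (f : ℕ → ℝ) (m : ℕ) (φ : ℕ → ℂ) : ℕ → ℂ := fun n =>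
  Complex.I * ∑ k ∈ Finset.Icc 1 m,
    ((if k ≤ n then φ (n - k) / ((f n - f (n - k) : ℝ) : ℂ) else 0)
      - φ (n + k) / ((f (n + k) - f n : ℝ) : ℂ))

/-- `(φ, ψ)` is in the graph of `T_f`. -/
def InGraphTf (f : ℕ → ℝ) (φ ψ : l2) : Prop :=
  ∃ h : ∀ m, Memℓp (TfmSeq f m (⇑φ)) 2,
    Tendsto (fun m => (⟨TfmSeq f m (⇑φ), h m⟩ : l2)) atTop (𝓝 ψ)


/-- The conditions that `g, h` witness membership of `f` in `𝓜(β)`: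
`g : ℕ → (0,∞)`, `h ∈ ℓ¹(ℕ_{≥1})`, `∑_n f(n)²/g(n) < ∞`, and
`g(n) / (f(n)^β Δ_k(f², n))² ≤ h(k)²` for all `n` and all `k ≥ 1`. -/
def MWitness (β : ℝ) (f g h : ℕ → ℝ) : Prop :=
  (∀ n, 0 < g n) ∧
  Summable (fun k : ℕ => |h (k + 1)|) ∧
  Summable (fun n => (f n) ^ 2 / g n) ∧
  ∀ n k : ℕ, 1 ≤ k →
    g n / (Real.rpow (f n) β * ((f (n + k)) ^ 2 - (f n) ^ 2)) ^ 2 ≤ (h k) ^ 2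

/-- The class `𝓜(β)`. -/
def MemM (β : ℝ) (f : ℕ → ℝ) : Prop := MemKminus f ∧ ∃ g h : ℕ → ℝ, MWitness β f g h

/-- The class `𝓜_s(β)`: as `𝓜(β)`, with a uniform bound `C` on the sums
`∑_{k=1}^n g(n) / (f(n-k)^β (f(n)² - f(n-k)²))²` for the same witness `g`. -/
def MemMs (β : ℝ) (f : ℕ → ℝ) : Prop :=
  MemKminus f ∧ ∃ g h : ℕ → ℝ, MWitness β f g h ∧
    ∃ C : ℝ, 0 < C ∧ ∀ n : ℕ,
      (∑ k ∈ Finset.Icc 1 n,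
        g n / (Real.rpow (f (n - k)) β * ((f n) ^ 2 - (f (n - k)) ^ 2)) ^ 2) < C

/-! Write `T_{f,m} = i ∑_{k ≤ m} (L*^k Δ_k⁻¹ - Δ_k⁻¹ L^k)`. The `𝓜(1)` condition gives
`Δ_k(f², n)⁻¹ ≤ |h k| u(n)` with `u = f / √g ∈ ℓ²`, so `Δ_k(f², N)⁻¹` maps a sequence bounded
by `‖φ‖` into `ℓ²` with norm at most `|h k| ‖u‖ ‖φ‖`. Shifts do not increase norms, hence the
`k`-th term of the series has norm at most `2 ‖u‖ |h k| ‖φ‖`, which is summable in `k`: the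
series converges absolutely in `ℓ²` and `‖T_{f²} φ‖ ≤ 2 ‖u‖ (∑ |h k|) ‖φ‖`. -/

open Function

theorem norm_rpow_extend_zero {α β E : Type*} [NormedAddCommGroup E] {r : ℝ} (hr : 0 < r)
    (g : α → β) (v : α → E) :
    (fun b => ‖extend g v 0 b‖ ^ r) = extend g (fun a => ‖v a‖ ^ r) 0 := by
  ext b
  rw [apply_extend (fun x : E => ‖x‖ ^ r)]
  congr
  ext
  simp [Real.zero_rpow hr.ne']

theorem Memℓp.extend_zero {α β E : Type*} [NormedAddCommGroup E] {p : ℝ≥0∞}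
    (hp : 0 < p.toReal) {g : α → β} (hg : Injective g) {v : α → E} (hv : Memℓp v p) :
    Memℓp (extend g v 0) p := by
  rw [memℓp_gen_iff hp] at hv ⊢
  rwa [norm_rpow_extend_zero hp, summable_extend_zero hg]

theorem lp.norm_extend_zero {α β E : Type*} [NormedAddCommGroup E] {p : ℝ≥0∞}
    (hp : 0 < p.toReal) {g : α → β} (hg : Injective g) {v : α → E} (hv : Memℓp v p) :
    ‖(⟨extend g v 0, hv.extend_zero hp hg⟩ : lp (fun _ => E) p)‖ =
      ‖(⟨v, hv⟩ : lp (fun _ => E) p)‖ := by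
  rw [lp.norm_eq_tsum_rpow hp, lp.norm_eq_tsum_rpow hp]
  exact congrArg (· ^ (1 / p.toReal))
    ((congrArg tsum (norm_rpow_extend_zero hp g v)).trans (tsum_extend_zero hg _))

theorem extend_add_right_apply {E : Type*} [Zero E] (v : ℕ → E) (k n : ℕ) :
    extend (· + k) v 0 n = if k ≤ n then v (n - k) else 0 := by
  split_ifs with h
  · obtain ⟨m, rfl⟩ := Nat.exists_eq_add_of_le' h
    rw [Nat.add_sub_cancel, (add_left_injective k).extend_apply]
  · exact extend_apply' _ _ _ (by rintro ⟨m, rfl⟩; omega)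

def deltaInvSeq (f : ℕ → ℝ) (k : ℕ) (ψ : ℕ → ℂ) : ℕ → ℂ :=
  fun m => ψ m / ((f (m + k) - f m : ℝ) : ℂ)

/-- `extend (· + k) v 0` is `L*^k v`. -/
theorem TfmSeq_eq_sum (f : ℕ → ℝ) (m : ℕ) (φ : ℕ → ℂ) :
    TfmSeq f m φ = ∑ j ∈ Finset.range m, Complex.I •
      (extend (· + (j + 1)) (deltaInvSeq f (j + 1) φ) 0 -
        deltaInvSeq f (j + 1) (fun n => φ (n + (j + 1)))) := by
  ext n
  rw [TfmSeq, ← Finset.Ico_add_one_right_eq_Icc, ← Finset.sum_Ico_add' _ 0 m 1,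
    ← Finset.range_eq_Ico, Finset.mul_sum, Finset.sum_apply]
  refine Finset.sum_congr rfl fun j _ => ?_
  simp only [Pi.smul_apply, Pi.sub_apply, smul_eq_mul, extend_add_right_apply, deltaInvSeq]
  split_ifs with h
  · rw [Nat.sub_add_cancel h]
  · rfl

theorem exists_l2_deltaInvSeq {f : ℕ → ℝ} {k : ℕ} {c : ℝ} (hc : 0 ≤ c)
    (u : lp (fun _ : ℕ => ℝ) 2) (hfu : ∀ m, |f (m + k) - f m|⁻¹ ≤ c * u m)
    {ψ : ℕ → ℂ} {M : ℝ} (hψ : ∀ m, ‖ψ m‖ ≤ M) :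
    ∃ x : l2, ⇑x = deltaInvSeq f k ψ ∧ ‖x‖ ≤ M * c * ‖u‖ := by
  have hM : 0 ≤ M := (norm_nonneg _).trans (hψ 0)
  have hle : ∀ m, ‖deltaInvSeq f k ψ m‖ ≤ ‖((M * c) • u) m‖ := fun m => calc
    ‖deltaInvSeq f k ψ m‖ = ‖ψ m‖ * |f (m + k) - f m|⁻¹ := by
      rw [deltaInvSeq, norm_div, Complex.norm_real, Real.norm_eq_abs, div_eq_mul_inv]
    _ ≤ M * (c * u m) := mul_le_mul (hψ m) (hfu m) (by positivity) hM
    _ ≤ ‖((M * c) • u) m‖ := by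
      rw [lp.coeFn_smul, Pi.smul_apply, smul_eq_mul, mul_assoc]
      exact Real.le_norm_self _
  refine ⟨⟨_, (lp.memℓp _).mono' hle⟩, rfl, ?_⟩
  calc _ ≤ ‖(M * c) • u‖ := lp.norm_mono two_ne_zero hle
    _ = M * c * ‖u‖ := by
      rw [lp.norm_const_smul two_ne_zero, Real.norm_of_nonneg (mul_nonneg hM hc)]

theorem exists_l2_shift_sub_deltaInvSeq {f : ℕ → ℝ} {k : ℕ} {c : ℝ} (hc : 0 ≤ c)
    (u : lp (fun _ : ℕ => ℝ) 2) (hfu : ∀ m, |f (m + k) - f m|⁻¹ ≤ c * u m) (φ : l2) :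
    ∃ x : l2, ⇑x = Complex.I • (extend (· + k) (deltaInvSeq f k φ) 0 -
        deltaInvSeq f k (fun n => φ (n + k))) ∧ ‖x‖ ≤ 2 * ‖u‖ * c * ‖φ‖ := by
  have hφ : ∀ n, ‖φ n‖ ≤ ‖φ‖ := lp.norm_apply_le_norm two_ne_zero φ
  obtain ⟨a, ha_eq, ha⟩ := exists_l2_deltaInvSeq hc u hfu hφ
  obtain ⟨b, hb, hb_le⟩ := exists_l2_deltaInvSeq hc u hfu fun n => hφ (n + k)
  have htwo : 0 < (2 : ℝ≥0∞).toReal := by norm_num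
  let a' : l2 := ⟨_, (lp.memℓp a).extend_zero htwo (add_left_injective k)⟩
  refine ⟨Complex.I • (a' - b), by rw [lp.coeFn_smul, lp.coeFn_sub, hb, ← ha_eq], ?_⟩
  calc ‖Complex.I • (a' - b)‖ = ‖a' - b‖ := by rw [norm_smul, Complex.norm_I, one_mul]
    _ ≤ ‖a'‖ + ‖b‖ := norm_sub_le _ _
    _ = ‖a‖ + ‖b‖ := by rw [lp.norm_extend_zero htwo (add_left_injective k) (lp.memℓp a)]
    _ ≤ 2 * ‖u‖ * c * ‖φ‖ := by linarith

theorem inGraphTf_tsum {f : ℕ → ℝ} {φ : l2} {x : ℕ → l2} (hx : Summable x)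
    (hTfm : ∀ m, ⇑(∑ j ∈ Finset.range m, x j) = TfmSeq f m φ) :
    InGraphTf f φ (∑' j, x j) := by
  refine ⟨fun m => hTfm m ▸ lp.memℓp _, ?_⟩
  convert hx.hasSum.tendsto_sum_nat using 2 with m
  exact lp.ext (hTfm m).symm

theorem exists_bound_inGraphTf_of_inv_sub_le {f c : ℕ → ℝ} (hc : Summable fun k => |c (k + 1)|)
    (u : lp (fun _ : ℕ => ℝ) 2) (hfu : ∀ n k, 1 ≤ k → |f (n + k) - f n|⁻¹ ≤ |c k| * u n) :
    ∃ C, ∀ φ : l2, ∃ Tφ : l2, InGraphTf f φ Tφ ∧ ‖Tφ‖ ≤ C * ‖φ‖ := by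
  refine ⟨2 * ‖u‖ * ∑' k, |c (k + 1)|, fun φ => ?_⟩
  choose x hx hx_le using fun j : ℕ =>
    exists_l2_shift_sub_deltaInvSeq (abs_nonneg _) u (fun n => hfu n (j + 1) j.succ_pos) φ
  have hb : HasSum (fun j => 2 * ‖u‖ * |c (j + 1)| * ‖φ‖)
      (2 * ‖u‖ * (∑' k, |c (k + 1)|) * ‖φ‖) :=
    (hc.hasSum.mul_left _).mul_right _
  refine ⟨∑' j, x j, inGraphTf_tsum (hb.summable.of_norm_bounded hx_le) fun m => ?_,
    tsum_of_norm_bounded hb hx_le⟩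
  rw [lp.coeFn_sum, TfmSeq_eq_sum]
  simp only [hx]

theorem MemK.pos {f : ℕ → ℝ} (hf : MemK f) (n : ℕ) : 0 < f n := by
  induction n with
  | zero => exact hf.1
  | succ n ih => exact ih.trans (hf.2 n)

theorem MWitness.memℓp_two {β : ℝ} {f g h : ℕ → ℝ} (hw : MWitness β f g h) :
    Memℓp (fun n => f n / √(g n)) 2 := by
  rw [memℓp_gen_iff (by norm_num)]
  convert hw.2.2.1 using 2 with n
  rw [ENNReal.toReal_ofNat, Real.rpow_two, Real.norm_eq_abs, sq_abs, div_pow,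
    Real.sq_sqrt (hw.1 n).le]

theorem MWitness.inv_sub_sq_le {f g h : ℕ → ℝ} (hw : MWitness 1 f g h) (hf : ∀ n, 0 < f n)
    {n k : ℕ} (hk : 1 ≤ k) :
    |f (n + k) ^ 2 - f n ^ 2|⁻¹ ≤ |h k| * (f n / √(g n)) := by
  set Δ := f (n + k) ^ 2 - f n ^ 2
  have hf_n := hf n
  rcases eq_or_ne Δ 0 with hΔ | hΔ
  · rw [hΔ, abs_zero, inv_zero]
    positivity
  have hg : g n ≤ (|h k| * f n * |Δ|) ^ 2 := by
    have hw_nk := hw.2.2.2 n k hk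
    rw [show Real.rpow (f n) 1 = f n from Real.rpow_one _,
      div_le_iff₀ (by positivity)] at hw_nk
    calc g n ≤ h k ^ 2 * (f n * Δ) ^ 2 := hw_nk
      _ = (|h k| * f n * |Δ|) ^ 2 := by simp only [mul_pow, sq_abs]; ring
  have hsqrt : √(g n) ≤ |h k| * f n * |Δ| :=
    Real.sqrt_le_iff.mpr ⟨by positivity, hg⟩
  rw [mul_div_assoc', le_div_iff₀ (Real.sqrt_pos.mpr (hw.1 n)),
    inv_mul_le_iff₀ (abs_pos.mpr hΔ)]
  linarith

/-- Let `f ∈ 𝓜(1)`. Then `T_{f²}` is an everywhere defined bounded operator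
on `ℓ²(ℕ)`. -/
theorem stmt9 (f : ℕ → ℝ) (hf : MemM 1 f) :
    ∃ C : ℝ, ∀ φ : l2, ∃ Tφ : l2, InGraphTf (fsq f) φ Tφ ∧ ‖Tφ‖ ≤ C * ‖φ‖ := by
  obtain ⟨⟨hK, -⟩, g, h, hw⟩ := hf
  exact exists_bound_inGraphTf_of_inv_sub_le hw.2.1 ⟨_, hw.memℓp_two⟩
    fun n k hk => hw.inv_sub_sq_le hK.pos hk
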